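/- arXiv:2010.12649 — 5 statements merged into one kernel-verified Lean document; each statement's English description precedes it below -/
import Mathlib

section
/- Let G be a d-regular graph on n vertices with adjacency eigenvalues λ₁ = d ≥ λ₂ ≥ ... ≥ λₙ, with λₙ < 0. Then the independence number satisfies α(G) ≤ n / (1 - λ₁/λₙ) (the Hoffman ratio bound). -/
open Polynomial Finset

/-- The independence number of a simple graph: the maximum size of a set of
pairwise non-adjacent vertices. -/
noncomputable def SimpleGraph.indepNum' {V : Type*} [Fintype V] (G : SimpleGraph V) : ℕ :=
  sSup {m | ∃ s : Finset V, s.card = m ∧ ∀ u ∈ s, ∀ v ∈ s, ¬ G.Adj u v}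

/-- The `k`-th power of a graph: distinct vertices are adjacent iff
their distance in `G` is (finite and) at most `k`. -/
def SimpleGraph.power {V : Type*} (G : SimpleGraph V) (k : ℕ) : SimpleGraph V where
  Adj u v := u ≠ v ∧ G.Reachable u v ∧ G.dist u v ≤ k
  symm := by
    constructor
    intro u v ⟨h1, h2, h3⟩
    exact ⟨h1.symm, h2.symm, by rwa [SimpleGraph.dist_comm]⟩
  loopless := by constructor; intro u ⟨h, _⟩; exact h rfl

/-- The `k`-independence number: the maximum size of a set of vertices at
pairwise distance greater than `k`. -/
noncomputable def SimpleGraph.kIndepNum {V : Type*} [Fintype V] (G : SimpleGraph V) (k : ℕ) : ℕ :=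
  (G.power k).indepNum'

/-! If every eigenvalue of the adjacency matrix `A` is at least `λₙ`, then `λₙ ‖x‖² ≤ xᵀ A x`
for every `x`. For an independent set `S` of size `a`, test this with `x = n • 1_S - a • 1`:
independence gives `1_Sᵀ A 1_S = 0` and regularity gives `A 1 = d • 1`, so `xᵀ A x = -n d a²`
while `‖x‖² = n a (n - a)`, which rearranges to `a ≤ n / (1 - d / λₙ)`. -/

open Matrix

namespace Matrix

variable {ι : Type*} [Fintype ι] [DecidableEq ι]

theorem spectrum_eq_range_of_charpoly_eq_prod {K : Type*} [Field K] {A : Matrix ι ι K}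
    {lam : ι → K} (hchar : A.charpoly = ∏ i, (X - C (lam i))) :
    spectrum K A = Set.range lam := by
  ext μ
  rw [mem_spectrum_iff_isRoot_charpoly, hchar, isRoot_prod]
  simp [sub_eq_zero, eq_comm]

theorem posSemidef_sub_smul_one_of_charpoly_eq_prod {A : Matrix ι ι ℝ} (hA : A.IsHermitian)
    {lam : ι → ℝ} (hchar : A.charpoly = ∏ i, (X - C (lam i))) {m : ℝ} (hm : ∀ i, m ≤ lam i) :
    (A - m • 1).PosSemidef := by
  rw [posSemidef_iff_isHermitian_and_spectrum_nonneg]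
  refine ⟨hA.sub (isHermitian_one.smul (.all m)), ?_⟩
  rw [← Algebra.algebraMap_eq_smul_one, ← spectrum.sub_singleton_eq,
    spectrum_eq_range_of_charpoly_eq_prod hchar]
  rintro _ ⟨_, ⟨i, rfl⟩, _, rfl, rfl⟩
  simpa using hm i

theorem mul_dotProduct_self_le_dotProduct_mulVec_of_charpoly_eq_prod {A : Matrix ι ι ℝ}
    (hA : A.IsHermitian) {lam : ι → ℝ} (hchar : A.charpoly = ∏ i, (X - C (lam i))) {m : ℝ}
    (hm : ∀ i, m ≤ lam i) (x : ι → ℝ) : m * (x ⬝ᵥ x) ≤ x ⬝ᵥ (A *ᵥ x) := by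
  have := (posSemidef_sub_smul_one_of_charpoly_eq_prod hA hchar hm).dotProduct_mulVec_nonneg x
  simp only [star_trivial, sub_mulVec, smul_mulVec, one_mulVec, dotProduct_sub, dotProduct_smul,
    smul_eq_mul] at this
  linarith

end Matrix

theorem le_div_one_sub_div_of_mul_mul_sub_le {N a d m : ℝ} (hm : m < 0) (hd : 0 ≤ d)
    (ha : 0 ≤ a) (haN : a ≤ N) (h : m * (N * a * (N - a)) ≤ -(N * d * a ^ 2)) :
    a ≤ N / (1 - d / m) := by
  have hden : 0 < 1 - d / m := by linarith [div_nonpos_of_nonneg_of_nonpos hd hm.le]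
  rw [le_div_iff₀ hden]
  rcases ha.eq_or_lt with rfl | ha
  · simpa using haN
  have hquad : m * (N - a) + d * a ≤ 0 :=
    nonpos_of_mul_nonpos_right (by linear_combination h) (mul_pos (ha.trans_le haN) ha)
  rw [mul_sub, mul_one, mul_div_assoc', sub_le_comm, le_div_iff_of_neg hm]
  linarith

theorem indicator_one_dotProduct {V R : Type*} [Fintype V] [NonAssocSemiring R] (s : Finset V)
    (w : V → R) : (s : Set V).indicator 1 ⬝ᵥ w = ∑ v ∈ s, w v := by
  simp_rw [dotProduct, ← Set.indicator_mul_left, Pi.one_apply, one_mul]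
  exact sum_indicator_subset _ (subset_univ s)

namespace SimpleGraph

variable {V : Type*} [Fintype V] {G : SimpleGraph V}

theorem indepNum'_eq_indepNum : G.indepNum' = G.indepNum := by
  rw [indepNum', indepNum]
  congr! 3 with m
  refine exists_congr fun s ↦ ?_
  rw [isNIndepSet_iff, isIndepSet_iff, and_comm, Set.Pairwise]
  simp only [Finset.mem_coe]
  exact and_congr_left fun _ ↦ ⟨fun h u hu v hv _ ↦ h u hu v hv,
    fun h u hu v hv hadj ↦ h hu hv hadj.ne hadj⟩

variable [DecidableRel G.Adj] {d : ℕ} {s : Finset V}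

theorem adjMatrix_mulVec_one_of_regular (hreg : G.IsRegularOfDegree d) :
    G.adjMatrix ℝ *ᵥ 1 = (d : ℝ) • 1 := by
  ext v
  simp [hreg v]

theorem IsIndepSet.indicator_dotProduct_adjMatrix_mulVec_indicator (hs : G.IsIndepSet s) :
    (s : Set V).indicator 1 ⬝ᵥ (G.adjMatrix ℝ *ᵥ (s : Set V).indicator 1) = 0 := by
  rw [indicator_one_dotProduct]
  refine sum_eq_zero fun v hv ↦ ?_
  rw [adjMatrix_mulVec_apply]
  refine sum_eq_zero fun u hu ↦ Set.indicator_of_notMem (fun hus ↦ ?_) _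
  rw [mem_neighborFinset] at hu
  exact hs hv hus hu.ne hu

theorem one_dotProduct_adjMatrix_mulVec_indicator_of_regular (hreg : G.IsRegularOfDegree d) :
    1 ⬝ᵥ (G.adjMatrix ℝ *ᵥ (s : Set V).indicator 1) = d * #s := by
  rw [dotProduct_mulVec, ← G.transpose_adjMatrix, vecMul_transpose,
    adjMatrix_mulVec_one_of_regular hreg, smul_dotProduct, dotProduct_comm,
    indicator_one_dotProduct]
  simp

theorem IsRegularOfDegree.card_le_div_of_isIndepSet (hreg : G.IsRegularOfDegree d) {m : ℝ}
    (hm : m < 0) (hA : ∀ x, m * (x ⬝ᵥ x) ≤ x ⬝ᵥ (G.adjMatrix ℝ *ᵥ x)) (hs : G.IsIndepSet s) :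
    (#s : ℝ) ≤ Fintype.card V / (1 - d / m) := by
  set χ : V → ℝ := (s : Set V).indicator 1
  set N : ℝ := (Fintype.card V : ℝ)
  set a : ℝ := (#s : ℝ)
  have hχχ : χ ⬝ᵥ χ = a := by
    rw [indicator_one_dotProduct, sum_congr rfl fun v hv ↦ Set.indicator_of_mem (mem_coe.2 hv) _]
    simp [a]
  have hχ1 : χ ⬝ᵥ 1 = a := by simp [χ, a, indicator_one_dotProduct]
  have h11 : (1 : V → ℝ) ⬝ᵥ 1 = N := one_dotProduct_one
  have hχAχ : χ ⬝ᵥ (G.adjMatrix ℝ *ᵥ χ) = 0 := hs.indicator_dotProduct_adjMatrix_mulVec_indicator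
  have h1Aχ : 1 ⬝ᵥ (G.adjMatrix ℝ *ᵥ χ) = d * a :=
    one_dotProduct_adjMatrix_mulVec_indicator_of_regular hreg
  set x : V → ℝ := N • χ - a • 1 with hx
  have hxx : x ⬝ᵥ x = N * a * (N - a) := by
    simp only [hx, dotProduct_sub, sub_dotProduct, dotProduct_smul, smul_dotProduct,
      dotProduct_comm 1 χ, hχχ, hχ1, h11, smul_eq_mul]
    ring
  have hxAx : x ⬝ᵥ (G.adjMatrix ℝ *ᵥ x) = -(N * d * a ^ 2) := by
    simp only [hx, mulVec_sub, mulVec_smul, adjMatrix_mulVec_one_of_regular hreg, dotProduct_sub,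
      sub_dotProduct, dotProduct_smul, smul_dotProduct, hχ1, h11, hχAχ, h1Aχ, smul_eq_mul]
    ring
  have key := hA x
  rw [hxx, hxAx] at key
  exact le_div_one_sub_div_of_mul_mul_sub_le hm d.cast_nonneg (Nat.cast_nonneg _)
    (Nat.cast_le.mpr (card_le_univ s)) key

end SimpleGraph

/-- **Hoffman ratio bound.** If `G` is a connected `d`-regular graph (`d ≥ 1`) on `n`
vertices with adjacency eigenvalues `λ₁ = d ≥ λ₂ ≥ ⋯ ≥ λₙ` and `λₙ < 0`, then
`α(G) ≤ n / (1 - λ₁/λₙ)`. -/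
theorem hoffman_ratio_bound {n d : ℕ} (hn : 0 < n) (G : SimpleGraph (Fin n))
    [DecidableRel G.Adj] (hreg : G.IsRegularOfDegree d)
    (lam : Fin n → ℝ) (hlam : Antitone lam)
    (hchar : (G.adjMatrix ℝ).charpoly = ∏ i, (X - C (lam i)))
    (hlam1 : lam ⟨0, hn⟩ = d) (hlamn : lam ⟨n - 1, by omega⟩ < 0) :
    (G.indepNum' : ℝ) ≤ n / (1 - lam ⟨0, hn⟩ / lam ⟨n - 1, by omega⟩) := by
  have hmin (i : Fin n) : lam ⟨n - 1, by omega⟩ ≤ lam i :=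
    hlam (show i ≤ ⟨n - 1, _⟩ from Nat.le_sub_one_of_lt i.isLt)
  obtain ⟨s, hs⟩ := G.exists_isNIndepSet_indepNum
  rw [SimpleGraph.indepNum'_eq_indepNum, ← hs.card_eq, hlam1]
  have hform := mul_dotProduct_self_le_dotProduct_mulVec_of_charpoly_eq_prod
    (G.isHermitian_adjMatrix ℝ) hchar hmin
  simpa using hreg.card_le_div_of_isIndepSet hlamn hform hs.isIndepSet
end

section
/- Let G be a regular connected graph with adjacency eigenvalues λ₁ > λ₂ ≥ ... ≥ λₙ, and suppose q'(A(G)) = A(G^k) for a polynomial q' of degree at most k with min_{i≥2} q'(λᵢ) < 0. Then the k-distance chromatic number satisfies χ_k(G) ≥ 1 - q'(λ₁)/min_{i∈[2,n]} q'(λᵢ). -/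
open Polynomial Finset

/-!
A colour class `S` of `G^k` is an independent set of `G^k`, so `𝟙_Sᵀ A(G^k) 𝟙_S = 0`.
Since `A(G^k) = q'(A(G))`, the all-ones vector is an eigenvector of `A(G^k)` for `q'(λ₁)`
(`λ₁ = d` for a `d`-regular graph), and the quadratic form of `A(G^k)` is bounded below by `μ`
times the squared norm, `μ` being the least `q'(λᵢ)`. Testing this bound on `n 𝟙_S - |S| 𝟙` gives
Hoffman's ratio bound `|S| (q'(λ₁) - μ) ≤ -μ n`; summing over the `χ_k(G)` colour classes gives
`n (q'(λ₁) - μ) ≤ -μ n χ_k(G)`.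
-/

open Matrix

section Spectrum

variable {ι : Type*} [Fintype ι] [DecidableEq ι]

lemma Matrix.mem_spectrum_iff_exists_mulVec_eq_smul {K : Type*} [Field K] {A : Matrix ι ι K}
    {x : K} : x ∈ spectrum K A ↔ ∃ v ≠ 0, A *ᵥ v = x • v := by
  rw [← Matrix.spectrum_toLin', ← Module.End.hasEigenvalue_iff_mem_spectrum]
  constructor
  · intro h
    obtain ⟨v, hv⟩ := h.exists_hasEigenvector
    exact ⟨v, hv.2, by simpa using hv.apply_eq_smul⟩
  · rintro ⟨v, hv0, hv⟩
    exact Module.End.hasEigenvalue_of_hasEigenvector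
      ⟨Module.End.mem_eigenspace_iff.mpr (by simpa using hv), hv0⟩

lemma Matrix.spectrum_eq_range_of_charpoly_eq_prod_s3 {K : Type*} [Field K] {A : Matrix ι ι K}
    {lam : ι → K} (h : A.charpoly = ∏ i, (X - C (lam i))) : spectrum K A = Set.range lam := by
  ext x
  simp only [mem_spectrum_iff_isRoot_charpoly, h, IsRoot.def, eval_prod, eval_sub, eval_X,
    eval_C, Finset.prod_eq_zero_iff, Finset.mem_univ, true_and, sub_eq_zero, Set.mem_range]
  exact exists_congr fun _ => eq_comm

lemma Matrix.aeval_mulVec_of_mulVec_eq_smul {R : Type*} [CommRing R] {A : Matrix ι ι R}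
    {x : R} {v : ι → R} (hv : A *ᵥ v = x • v) (p : R[X]) : aeval A p *ᵥ v = p.eval x • v := by
  have h := Module.End.aeval_apply_of_mem_apply_eq_smul (f := Matrix.toLinAlgEquiv' A) (p := p)
    (by simpa using hv)
  rwa [aeval_algEquiv, AlgHom.comp_apply] at h

lemma Matrix.IsHermitian.mul_dotProduct_self_le_dotProduct_aeval_mulVec {A : Matrix ι ι ℝ}
    (hA : A.IsHermitian) (p : ℝ[X]) {μ : ℝ} (hμ : ∀ x ∈ spectrum ℝ A, μ ≤ p.eval x)
    (z : ι → ℝ) : μ * (z ⬝ᵥ z) ≤ z ⬝ᵥ (aeval A p *ᵥ z) := by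
  have hpsd : (aeval A (p - C μ)).PosSemidef := by
    rw [← cfc_polynomial (p - C μ) A hA.isSelfAdjoint,
      posSemidef_iff_isHermitian_and_spectrum_nonneg]
    refine ⟨cfc_predicate _ A, ?_⟩
    rw [cfc_map_spectrum _ A]
    rintro _ ⟨x, hx, rfl⟩
    simpa using hμ x hx
  simpa [sub_mulVec, Algebra.algebraMap_eq_smul_one, smul_mulVec, dotProduct_smul] using
    hpsd.dotProduct_mulVec_nonneg z

end Spectrum

section Hoffman

variable {ι : Type*} [Fintype ι]

theorem Matrix.IsSymm.card_mul_sub_le_neg_mul_card {M : Matrix ι ι ℝ} (hM : M.IsSymm)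
    {D μ : ℝ} (hμ : μ ≤ 0) (hM1 : M *ᵥ (fun _ => 1) = D • fun _ => 1)
    (hquad : ∀ z, μ * (z ⬝ᵥ z) ≤ z ⬝ᵥ (M *ᵥ z))
    {S : Finset ι} (hS : ∀ i ∈ S, ∀ j ∈ S, M i j = 0) :
    #S * (D - μ) ≤ -μ * Fintype.card ι := by
  classical
  set one : ι → ℝ := fun _ => 1
  set χ : ι → ℝ := fun i => if i ∈ S then 1 else 0
  set n : ℝ := (Fintype.card ι : ℝ)
  set s : ℝ := (#S : ℝ)
  have h11 : one ⬝ᵥ one = n := by simp [one, n, dotProduct]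
  have h1χ : one ⬝ᵥ χ = s := by simp [one, χ, s, dotProduct]
  have hχ1 : χ ⬝ᵥ one = s := by simp [one, χ, s, dotProduct]
  have hχχ : χ ⬝ᵥ χ = s := by simp [χ, s, dotProduct]
  have hχMχ : χ ⬝ᵥ (M *ᵥ χ) = 0 := by
    simp only [χ, dotProduct, mulVec, ite_mul, one_mul, zero_mul, mul_ite, mul_one, mul_zero]
    exact Finset.sum_eq_zero fun i _ => by
      split_ifs with hi
      · exact Finset.sum_eq_zero fun j _ => by
          split_ifs with hj
          exacts [hS i hi j hj, rfl]
      · rfl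
  have h1Mχ : one ⬝ᵥ (M *ᵥ χ) = D * s := by
    rw [dotProduct_mulVec, ← mulVec_transpose, hM.eq, hM1, smul_dotProduct, h1χ, smul_eq_mul]
  have hχM1 : χ ⬝ᵥ (M *ᵥ one) = D * s := by rw [hM1, dotProduct_smul, hχ1, smul_eq_mul]
  have h1M1 : one ⬝ᵥ (M *ᵥ one) = D * n := by rw [hM1, dotProduct_smul, h11, smul_eq_mul]
  have htest := hquad (n • χ - s • one)
  simp only [mulVec_sub, mulVec_smul, sub_dotProduct, dotProduct_sub, smul_dotProduct,
    dotProduct_smul, smul_eq_mul, h11, h1χ, hχ1, hχχ, hχMχ, h1Mχ, hχM1, h1M1] at htest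
  have hs : 0 ≤ s := by positivity
  have hsn : s ≤ n := by simp only [s, n]; exact_mod_cast S.card_le_univ
  have key : n * s * (s * (D - μ) + μ * n) ≤ 0 := by nlinarith
  rcases hs.eq_or_lt with hs0 | hs0
  · rw [← hs0]; nlinarith
  · linarith [nonpos_of_mul_nonpos_right key (mul_pos (hs0.trans_le hsn) hs0)]

end Hoffman

namespace SimpleGraph

variable {V : Type*} [Fintype V]

theorem Colorable.one_sub_div_le {H : SimpleGraph V} [DecidableRel H.Adj] [Nonempty V]
    {D μ : ℝ} (hμ : μ < 0) (hH1 : H.adjMatrix ℝ *ᵥ (fun _ => 1) = D • fun _ => 1)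
    (hquad : ∀ z, μ * (z ⬝ᵥ z) ≤ z ⬝ᵥ (H.adjMatrix ℝ *ᵥ z)) {c : ℕ} (hc : H.Colorable c) :
    1 - D / μ ≤ c := by
  obtain ⟨C⟩ := hc
  set colourClass : Fin c → Finset V := fun t => {v | C v = t}
  have hclass : ∀ t, #(colourClass t) * (D - μ) ≤ -μ * Fintype.card V := fun t =>
    H.isSymm_adjMatrix.card_mul_sub_le_neg_mul_card hμ.le hH1 hquad fun u hu v hv => by
      simp only [colourClass, Finset.mem_filter, Finset.mem_univ, true_and] at hu hv
      have : ¬H.Adj u v := fun h => C.valid h (hu.trans hv.symm)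
      simp [adjMatrix_apply, this]
  have hcard : ∑ t, (#(colourClass t) : ℝ) = Fintype.card V := by
    exact_mod_cast (Finset.card_eq_sum_card_fiberwise (fun v _ => Finset.mem_univ (C v))).symm
  have hsum : Fintype.card V * (D - μ) ≤ c * (-μ * Fintype.card V) := by
    simpa [← hcard, Finset.sum_mul] using Finset.sum_le_sum fun t (_ : t ∈ Finset.univ) => hclass t
  have hn : (0 : ℝ) < Fintype.card V := by exact_mod_cast Fintype.card_pos
  have : 1 - (c : ℝ) ≤ D / μ := (le_div_iff_of_neg hμ).mpr (by nlinarith)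
  linarith

variable {G : SimpleGraph V} [DecidableRel G.Adj] {d : ℕ}

lemma IsRegularOfDegree.adjMatrix_mulVec_one (hG : G.IsRegularOfDegree d) :
    G.adjMatrix ℝ *ᵥ (fun _ => 1) = (d : ℝ) • fun _ => 1 := by
  ext v
  simpa using adjMatrix_mulVec_const_apply_of_regular (α := ℝ) (a := 1) hG (v := v)

variable [DecidableEq V]

lemma IsRegularOfDegree.mem_spectrum_adjMatrix [Nonempty V] (hG : G.IsRegularOfDegree d) :
    (d : ℝ) ∈ spectrum ℝ (G.adjMatrix ℝ) :=
  Matrix.mem_spectrum_iff_exists_mulVec_eq_smul.mpr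
    ⟨_, Function.ne_iff.mpr ⟨Classical.arbitrary V, one_ne_zero⟩, hG.adjMatrix_mulVec_one⟩

lemma IsRegularOfDegree.abs_le_of_mem_spectrum_adjMatrix (hG : G.IsRegularOfDegree d) {x : ℝ}
    (hx : x ∈ spectrum ℝ (G.adjMatrix ℝ)) : |x| ≤ d := by
  let _ := Matrix.linftyOpSeminormedAddCommGroup (m := V) (n := V) (α := ℝ)
  obtain ⟨v, hv0, hv⟩ := Matrix.mem_spectrum_iff_exists_mulVec_eq_smul.mp hx
  have hnorm : ‖G.adjMatrix ℝ‖ = d := by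
    have : Nonempty V := ⟨(Function.ne_iff.mp hv0).choose⟩
    have hrow : ∀ i, ∑ j, ‖G.adjMatrix ℝ i j‖₊ = d := fun i => by
      simp [adjMatrix_apply, apply_ite, Finset.sum_boole, ← neighborFinset_eq_filter,
        hG.degree_eq i]
    rw [linfty_opNorm_def]
    simp only [hrow, Finset.sup_const Finset.univ_nonempty, NNReal.coe_natCast]
  have := Matrix.linfty_opNorm_mulVec (G.adjMatrix ℝ) v
  rw [hv, norm_smul, hnorm, Real.norm_eq_abs] at this
  exact le_of_mul_le_mul_right this (norm_pos_iff.mpr hv0)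

end SimpleGraph

theorem ratio_bound_chromatic_power_general {n d k : ℕ} (hn : 0 < n)
    (G : SimpleGraph (Fin n)) [DecidableRel G.Adj] [DecidableRel (G.power k).Adj]
    (hreg : G.IsRegularOfDegree d)
    (lam : Fin n → ℝ) (hlam : Antitone lam)
    (hchar : (G.adjMatrix ℝ).charpoly = ∏ i, (X - C (lam i)))
    (q' : Polynomial ℝ)
    (hq'A : aeval (G.adjMatrix ℝ) q' = (G.power k).adjMatrix ℝ)
    (μ : ℝ) (hμ : IsLeast {x | ∃ i, i ≠ ⟨0, hn⟩ ∧ x = q'.eval (lam i)} μ) (hμneg : μ < 0)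
    (c : ℕ) (hc : (G.power k).chromaticNumber = c) :
    1 - q'.eval (lam ⟨0, hn⟩) / μ ≤ (c : ℝ) := by
  have : Nonempty (Fin n) := ⟨⟨0, hn⟩⟩
  have hspec := Matrix.spectrum_eq_range_of_charpoly_eq_prod_s3 hchar
  have hlam₀ : lam ⟨0, hn⟩ = d := by
    obtain ⟨i, hi⟩ : (d : ℝ) ∈ Set.range lam := hspec ▸ hreg.mem_spectrum_adjMatrix
    refine le_antisymm ?_ (hi ▸ hlam (show (⟨0, hn⟩ : Fin n) ≤ i from Nat.zero_le _))
    exact (le_abs_self _).trans (hreg.abs_le_of_mem_spectrum_adjMatrix (hspec ▸ ⟨_, rfl⟩))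
  have hpower1 : (G.power k).adjMatrix ℝ *ᵥ (fun _ => 1) = q'.eval (lam ⟨0, hn⟩) • fun _ => 1 := by
    rw [← hq'A, aeval_mulVec_of_mulVec_eq_smul hreg.adjMatrix_mulVec_one, hlam₀]
  have hdegree : 0 ≤ q'.eval (lam ⟨0, hn⟩) := by
    have hdeg : ((G.power k).degree ⟨0, hn⟩ : ℝ) = q'.eval (lam ⟨0, hn⟩) := by
      simpa using congrFun hpower1 ⟨0, hn⟩
    exact hdeg ▸ Nat.cast_nonneg _
  have hquad : ∀ z, μ * (z ⬝ᵥ z) ≤ z ⬝ᵥ ((G.power k).adjMatrix ℝ *ᵥ z) := by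
    rw [← hq'A]
    refine (G.isHermitian_adjMatrix ℝ).mul_dotProduct_self_le_dotProduct_aeval_mulVec q' ?_
    rintro _ hx
    obtain ⟨i, rfl⟩ := hspec ▸ hx
    by_cases hi : i = ⟨0, hn⟩
    · subst hi; linarith
    · exact hμ.2 ⟨i, hi, rfl⟩
  exact (SimpleGraph.chromaticNumber_le_iff_colorable.mp hc.le).one_sub_div_le hμneg hpower1 hquad

/-- If `G` is a connected regular graph with eigenvalues `λ₁ > λ₂ ≥ ⋯ ≥ λₙ` and
`q'` is a polynomial of degree at most `k` with `q'(A(G)) = A(G^k)` and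
`min_{i ≥ 2} q'(λᵢ) < 0`, then `χ_k(G) ≥ 1 - q'(λ₁) / min_{i∈[2,n]} q'(λᵢ)`. -/
theorem ratio_bound_chromatic_power {n d k : ℕ} (hn : 0 < n) (hk : 1 ≤ k)
    (G : SimpleGraph (Fin n)) [DecidableRel G.Adj] [DecidableRel (G.power k).Adj]
    (hconn : G.Connected) (hreg : G.IsRegularOfDegree d)
    (lam : Fin n → ℝ) (hlam : Antitone lam)
    (hgap : ∀ i, i ≠ ⟨0, hn⟩ → lam i < lam ⟨0, hn⟩)
    (hchar : (G.adjMatrix ℝ).charpoly = ∏ i, (X - C (lam i)))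
    (q' : Polynomial ℝ) (hq' : q'.natDegree ≤ k)
    (hq'A : aeval (G.adjMatrix ℝ) q' = (G.power k).adjMatrix ℝ)
    (μ : ℝ) (hμ : IsLeast {x | ∃ i, i ≠ ⟨0, hn⟩ ∧ x = q'.eval (lam i)} μ) (hμneg : μ < 0)
    (c : ℕ) (hc : (G.power k).chromaticNumber = c) :
    1 - q'.eval (lam ⟨0, hn⟩) / μ ≤ (c : ℝ) :=
  ratio_bound_chromatic_power_general hn G hreg lam hlam hchar q' hq'A μ hμ hμneg c hc
end

section
/- Let G be a graph with n vertices and adjacency matrix A with eigenvalues λ₁ ≥ ... ≥ λₙ. For any real polynomial p of degree at most k, with W(p) = max_u (p(A))_{uu} and w(p) = min_u (p(A))_{uu}, the k-independence number satisfies α_k(G) ≤ min{ |{i : p(λᵢ) ≥ w(p)}| , |{i : p(λᵢ) ≤ W(p)}| }. -/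
open Polynomial Finset

/-!
Let `M = p(A)` and let `s` be a `k`-independent set. Since `A^i` counts walks of length `i` and
`deg p ≤ k`, the principal submatrix of `M` on `s` is diagonal, so the quadratic form of `M` is
at least `w(p) ‖x‖²` on the `|s|`-dimensional space of vectors supported on `s`. In the eigenbasis
of `A`, `M` is diagonal with entries `p(λᵢ)`, so that form is `< w(p) ‖x‖²` on the nonzero
vectors of the span of the eigenvectors with `p(λᵢ) < w(p)`. These two subspaces meet only in `0`,
whence `|s| + #{i : p(λᵢ) < w(p)} ≤ n`. The bound with `W(p)` is the same argument for `-p`.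
-/

open Matrix

namespace OrthonormalBasis

variable {ι E : Type*} [Fintype ι] [NormedAddCommGroup E] [InnerProductSpace ℝ E]
  (b : OrthonormalBasis ι ℝ E)

theorem repr_apply_eq_zero_of_mem_span_image {s : Finset ι} {i : ι} (hi : i ∉ s) {x : E}
    (hx : x ∈ Submodule.span ℝ (b '' s)) : b.repr x i = 0 := by
  have hspan : Submodule.span ℝ (b '' s) ≤ (ℝ ∙ b i)ᗮ := by
    rw [Submodule.span_le]
    rintro _ ⟨j, hj, rfl⟩
    rw [SetLike.mem_coe, Submodule.mem_orthogonal_singleton_iff_inner_right]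
    exact b.orthonormal.2 (by rintro rfl; exact hi hj)
  rw [b.repr_apply_apply]
  exact Submodule.mem_orthogonal_singleton_iff_inner_right.1 (hspan hx)

theorem finrank_span_image (s : Finset ι) :
    Module.finrank ℝ (Submodule.span ℝ (b '' s)) = #s := by
  rw [Set.image_eq_range]
  exact (finrank_span_eq_card (b.orthonormal.linearIndependent.comp _ Subtype.val_injective)).trans
    (Fintype.card_coe s)

variable {b} {T : E →ₗ[ℝ] E} {c : ι → ℝ}

theorem inner_map_self_eq_sum (hT : ∀ i, T (b i) = c i • b i) (x : E) :
    inner ℝ x (T x) = ∑ i, c i * b.repr x i ^ 2 := by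
  have hTx : T x = ∑ i, (b.repr x i * c i) • b i := by
    conv_lhs => rw [← b.sum_repr x]
    simp only [map_sum, map_smul, hT, smul_smul]
  simp only [hTx, inner_sum, inner_smul_right]
  exact sum_congr rfl fun i _ => by rw [real_inner_comm, ← b.repr_apply_apply]; ring

theorem inner_map_self_lt_of_mem_span (hT : ∀ i, T (b i) = c i • b i) {w : ℝ} {s : Finset ι}
    (hs : ∀ i ∈ s, c i < w) {x : E} (hx : x ∈ Submodule.span ℝ (b '' s)) (hx0 : x ≠ 0) :
    inner ℝ x (T x) < w * ‖x‖ ^ 2 := by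
  have hrepr : ∀ i ∉ s, b.repr x i = 0 := fun i hi => b.repr_apply_eq_zero_of_mem_span_image hi hx
  obtain ⟨i₀, hi₀⟩ : ∃ i, b.repr x i ≠ 0 := by
    by_contra! h
    exact hx0 (b.repr.injective (by ext i; simp [h i]))
  rw [b.inner_map_self_eq_sum hT, ← b.repr.norm_map, EuclideanSpace.real_norm_sq_eq, mul_sum]
  refine sum_lt_sum (fun i _ => ?_) ⟨i₀, mem_univ _, ?_⟩
  · by_cases hi : i ∈ s
    · exact mul_le_mul_of_nonneg_right (hs i hi).le (sq_nonneg _)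
    · simp [hrepr i hi]
  · have hi₀s : i₀ ∈ s := by_contra fun h => hi₀ (hrepr i₀ h)
    exact mul_lt_mul_of_pos_right (hs i₀ hi₀s) (by positivity)

theorem finrank_le_card_of_le_inner_map_self (hT : ∀ i, T (b i) = c i • b i) {w : ℝ}
    {U : Submodule ℝ E} (hU : ∀ x ∈ U, w * ‖x‖ ^ 2 ≤ inner ℝ x (T x)) :
    Module.finrank ℝ U ≤ #{i | w ≤ c i} := by
  have : FiniteDimensional ℝ E := b.toBasis.finiteDimensional_of_finite
  set s : Finset ι := {i | ¬ w ≤ c i}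
  have hdisj : Disjoint U (Submodule.span ℝ (b '' s)) := by
    rw [Submodule.disjoint_def]
    intro x hxU hxs
    by_contra hx0
    refine (hU x hxU).not_gt (inner_map_self_lt_of_mem_span hT (fun i hi => ?_) hxs hx0)
    simpa [s] using hi
  have hE : Module.finrank ℝ E = #{i | w ≤ c i} + #s := by
    rw [Module.finrank_eq_card_basis b.toBasis, card_filter_add_card_filter_not, card_univ]
  have hsum := Submodule.finrank_add_finrank_le_of_disjoint hdisj
  rw [b.finrank_span_image] at hsum
  omega

end OrthonormalBasis

section Matrix

variable {ι : Type*} [Fintype ι] [DecidableEq ι]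

theorem Matrix.mul_norm_sq_le_inner_toLpLin_self {M : Matrix ι ι ℝ} {s : Finset ι} {w : ℝ}
    (hdiag : ∀ u ∈ s, w ≤ M u u) (hoff : ∀ u ∈ s, ∀ v ∈ s, u ≠ v → M u v = 0)
    {x : EuclideanSpace ℝ ι} (hx : ∀ u ∉ s, x u = 0) :
    w * ‖x‖ ^ 2 ≤ inner ℝ x (toLpLin 2 2 M x) := by
  rw [EuclideanSpace.real_norm_sq_eq, mul_sum, EuclideanSpace.inner_eq_star_dotProduct]
  simp only [ofLp_toLpLin, toLin'_apply, star_trivial, dotProduct, mulVec]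
  refine sum_le_sum fun u _ => ?_
  by_cases hu : u ∈ s
  · have hrow : ∑ v, M u v * x v = M u u * x u := by
      refine sum_eq_single u (fun v _ hvu => ?_) (by simp)
      by_cases hv : v ∈ s
      · rw [hoff u hu v hv hvu.symm, zero_mul]
      · rw [hx v hv, mul_zero]
    rw [hrow, mul_assoc, ← sq]
    exact mul_le_mul_of_nonneg_right (hdiag u hu) (sq_nonneg _)
  · simp [hx u hu]

theorem Matrix.IsHermitian.toLpLin_aeval_eigenvectorBasis {A : Matrix ι ι ℝ} (hA : A.IsHermitian)
    (p : ℝ[X]) (i : ι) :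
    toLpLin 2 2 (aeval A p) (hA.eigenvectorBasis i) =
      p.eval (hA.eigenvalues i) • hA.eigenvectorBasis i := by
  have heig : toLpLin 2 2 A (hA.eigenvectorBasis i) = hA.eigenvalues i • hA.eigenvectorBasis i := by
    rw [toLpLin_apply, hA.mulVec_eigenvectorBasis]
    rfl
  change toLpLinAlgEquiv 2 (aeval A p) _ = _
  rw [← aeval_algHom_apply]
  exact Module.End.aeval_apply_of_mem_apply_eq_smul heig

end Matrix

theorem Finset.card_filter_eq_of_prod_X_sub_C_eq {R ι : Type*} [CommRing R] [IsDomain R]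
    [Fintype ι] {f g : ι → R} (h : ∏ i, (X - C (f i)) = ∏ i, (X - C (g i)))
    (P : R → Prop) [DecidablePred P] :
    #{i | P (f i)} = #{i | P (g i)} := by
  have hroots : ∀ f : ι → R, (∏ i, (X - C (f i))).roots = univ.val.map f := fun f => by
    rw [prod_eq_multiset_prod, ← roots_multiset_prod_X_sub_C (univ.val.map f), Multiset.map_map]
    rfl
  have hmap : univ.val.map f = univ.val.map g := by rw [← hroots, ← hroots, h]
  have hcount : ∀ f : ι → R, #{i | P (f i)} = (univ.val.map f).countP P := fun f => by
    rw [Multiset.countP_map]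
    rfl
  rw [hcount, hcount, hmap]

namespace SimpleGraph

theorem indepNum'_le {V : Type*} [Fintype V] (G : SimpleGraph V) {m : ℕ}
    (h : ∀ s : Finset V, (∀ u ∈ s, ∀ v ∈ s, ¬ G.Adj u v) → #s ≤ m) : G.indepNum' ≤ m :=
  csSup_le ⟨0, ∅, by simp⟩ fun _ ⟨s, hs, hind⟩ => hs ▸ h s hind

variable {V : Type*} [Fintype V] [DecidableEq V] (G : SimpleGraph V) [DecidableRel G.Adj]

theorem aeval_adjMatrix_apply_eq_zero {k : ℕ} {p : ℝ[X]} (hp : p.natDegree ≤ k) {u v : V}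
    (hne : u ≠ v) (huv : ¬ (G.power k).Adj u v) : aeval (G.adjMatrix ℝ) p u v = 0 := by
  have hpow : ∀ i ≤ k, (G.adjMatrix ℝ ^ i) u v = 0 := fun i hi => by
    rw [adjMatrix_pow_apply_eq_card_walk, Nat.cast_eq_zero, Fintype.card_eq_zero_iff]
    exact ⟨fun ⟨q, hq⟩ => huv ⟨hne, ⟨q⟩, (dist_le q).trans (hq ▸ hi)⟩⟩
  rw [aeval_eq_sum_range, Matrix.sum_apply]
  exact sum_eq_zero fun i hi => by
    rw [Matrix.smul_apply, hpow i (Nat.lt_succ_iff.1 (mem_range.1 hi) |>.trans hp), smul_zero]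

theorem card_le_card_eval_eigenvalues_ge {k : ℕ} {p : ℝ[X]} (hp : p.natDegree ≤ k) {s : Finset V}
    (hs : ∀ u ∈ s, ∀ v ∈ s, ¬ (G.power k).Adj u v) {w : ℝ}
    (hw : ∀ u ∈ s, w ≤ aeval (G.adjMatrix ℝ) p u u) :
    #s ≤ #{i | w ≤ p.eval ((G.isHermitian_adjMatrix ℝ).eigenvalues i)} := by
  set e := EuclideanSpace.basisFun V ℝ
  rw [← e.finrank_span_image s]
  refine OrthonormalBasis.finrank_le_card_of_le_inner_map_self
    ((G.isHermitian_adjMatrix ℝ).toLpLin_aeval_eigenvectorBasis p) fun x hx => ?_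
  exact Matrix.mul_norm_sq_le_inner_toLpLin_self hw
    (fun u hu v hv hne => G.aeval_adjMatrix_apply_eq_zero hp hne (hs u hu v hv))
    (fun u hu => e.repr_apply_eq_zero_of_mem_span_image hu hx)

end SimpleGraph

theorem inertial_type_bound_alpha_k_general {n k : ℕ} (G : SimpleGraph (Fin n)) [DecidableRel G.Adj]
    (lam : Fin n → ℝ)
    (hchar : (G.adjMatrix ℝ).charpoly = ∏ i, (X - C (lam i)))
    (p : Polynomial ℝ) (hp : p.natDegree ≤ k) (W w : ℝ)
    (hW : IsGreatest {x | ∃ u, x = (aeval (G.adjMatrix ℝ) p) u u} W)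
    (hw : IsLeast {x | ∃ u, x = (aeval (G.adjMatrix ℝ) p) u u} w) :
    G.kIndepNum k ≤ min ((univ.filter fun i => w ≤ p.eval (lam i)).card)
      ((univ.filter fun i => p.eval (lam i) ≤ W).card) := by
  have hcount := card_filter_eq_of_prod_X_sub_C_eq
    (hchar.symm.trans (G.isHermitian_adjMatrix ℝ).charpoly_eq)
  refine (G.power k).indepNum'_le fun s hs => le_min ?_ ?_
  · rw [hcount (fun x => w ≤ p.eval x)]
    exact G.card_le_card_eval_eigenvalues_ge hp hs fun u _ => hw.2 ⟨u, rfl⟩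
  · have hneg := G.card_le_card_eval_eigenvalues_ge (p := -p) (w := -W) (by rwa [natDegree_neg]) hs
      fun u _ => by simpa using hW.2 ⟨u, rfl⟩
    rw [hcount (fun x => p.eval x ≤ W)]
    simpa using hneg

/-- **Inertial-type bound for `α_k` (Abiad–Coutinho–Fiol).** For any graph `G` and any
polynomial `p` of degree at most `k`, with `W(p)` and `w(p)` the maximum and minimum
diagonal entries of `p(A)`,
`α_k(G) ≤ min{ #{i : p(λᵢ) ≥ w(p)}, #{i : p(λᵢ) ≤ W(p)} }`. -/
theorem inertial_type_bound_alpha_k {n k : ℕ} (G : SimpleGraph (Fin n)) [DecidableRel G.Adj]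
    (lam : Fin n → ℝ) (hlam : Antitone lam)
    (hchar : (G.adjMatrix ℝ).charpoly = ∏ i, (X - C (lam i)))
    (p : Polynomial ℝ) (hp : p.natDegree ≤ k) (W w : ℝ)
    (hW : IsGreatest {x | ∃ u, x = (aeval (G.adjMatrix ℝ) p) u u} W)
    (hw : IsLeast {x | ∃ u, x = (aeval (G.adjMatrix ℝ) p) u u} w) :
    G.kIndepNum k ≤ min ((univ.filter fun i => w ≤ p.eval (lam i)).card)
      ((univ.filter fun i => p.eval (lam i) ≤ W).card) :=
  inertial_type_bound_alpha_k_general G lam hchar p hp W w hW hw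
end

section
/- Let G be a graph on n vertices with adjacency matrix A, eigenvalues λ₁ ≥ ... ≥ λₙ, and Perron eigenvector (positive λ₁-eigenvector). Let p be a polynomial of degree at most k with p(λ₁) > p(λᵢ) for all i ≥ 2, and set W(p) = max_u (p(A))_{uu} and λ(p) = min_{i∈[2,n]} p(λᵢ). Then χ_k(G) ≥ (p(λ₁) − λ(p)) / (W(p) − λ(p)). -/
/-!
Fix a unit eigenvector `ν` for `λ₁` and, for each colour class `j` of a proper colouring of `G^k`,
let `y_j` be the restriction of `ν` to that class, so that `t_j := ‖y_j‖² = ⟪ν, y_j⟫` and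
`∑ t_j = 1`. Entries `p(A)_{uv}` count weighted walks of length `≤ k`, so they vanish for distinct
`u, v` of the same colour; hence `y_jᵀ p(A) y_j ≤ W t_j`. Expanding `y_j` in an orthonormal
eigenbasis gives `y_jᵀ p(A) y_j ≥ p(λ₁) t_j² + λ(p) (t_j - t_j²)`. Summing over the `c` classes and
using `∑ t_j² ≥ 1 / c` (Cauchy–Schwarz) gives `p(λ₁) - λ(p) ≤ c (W - λ(p))`.
-/

open Polynomial Finset

section

open Matrix
open scoped RealInnerProductSpace

theorem Fintype.exists_equiv_comp_eq_of_map_univ_eq {ι α : Type*} [Fintype ι] [DecidableEq α]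
    {f g : ι → α} (h : univ.val.map f = univ.val.map g) : ∃ e : ι ≃ ι, ∀ i, g (e i) = f i := by
  have hcard : ∀ a, Fintype.card {i // f i = a} = Fintype.card {i // g i = a} := fun a => by
    simpa [Fintype.card_subtype, Multiset.count_map, Finset.card_def, Finset.filter_val, eq_comm]
      using congrArg (Multiset.count a) h
  exact ⟨.ofFiberEquiv fun a => Fintype.equivOfCardEq (hcard a), Equiv.ofFiberEquiv_map _⟩

theorem Matrix.IsHermitian.exists_orthonormalBasis_mulVec_eq_of_charpoly_eq {ι : Type*}
    [Fintype ι] [DecidableEq ι] {A : Matrix ι ι ℝ} (hA : A.IsHermitian) {μ : ι → ℝ}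
    (h : A.charpoly = ∏ i, (X - C (μ i))) :
    ∃ b : OrthonormalBasis ι ℝ (EuclideanSpace ℝ ι), ∀ i, A *ᵥ ⇑(b i) = μ i • ⇑(b i) := by
  have hroots : univ.val.map hA.eigenvalues = univ.val.map μ := by
    have := hA.roots_charpoly_eq_eigenvalues
    rw [h, roots_prod _ _ (prod_ne_zero_iff.mpr fun i _ => X_sub_C_ne_zero _)] at this
    simpa using this.symm
  obtain ⟨e, he⟩ := Fintype.exists_equiv_comp_eq_of_map_univ_eq hroots.symm
  refine ⟨hA.eigenvectorBasis.reindex e.symm, fun i => ?_⟩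
  simpa [he] using hA.mulVec_eigenvectorBasis (e i)

theorem OrthonormalBasis.inner_aeval_apply_eq_sum_sq {ι E : Type*} [Fintype ι]
    [NormedAddCommGroup E] [InnerProductSpace ℝ E] (b : OrthonormalBasis ι ℝ E)
    {T : Module.End ℝ E} {μ : ι → ℝ} (hT : ∀ i, T (b i) = μ i • b i) (q : ℝ[X]) (y : E) :
    ⟪y, aeval T q y⟫ = ∑ i, q.eval (μ i) * ⟪b i, y⟫ ^ 2 := by
  have hTy : aeval T q y = ∑ i, (⟪b i, y⟫ * q.eval (μ i)) • b i := by
    conv_lhs => rw [← b.sum_repr' y]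
    simp only [map_sum, map_smul, Module.End.aeval_apply_of_mem_apply_eq_smul (hT _), smul_smul]
  rw [hTy, inner_sum]
  refine sum_congr rfl fun i _ => ?_
  rw [real_inner_smul_right, real_inner_comm]
  ring

theorem OrthonormalBasis.le_inner_aeval_apply {ι E : Type*} [Fintype ι] [DecidableEq ι]
    [NormedAddCommGroup E] [InnerProductSpace ℝ E] (b : OrthonormalBasis ι ℝ E)
    {T : Module.End ℝ E} {μ : ι → ℝ} (hT : ∀ i, T (b i) = μ i • b i) (q : ℝ[X]) (i₀ : ι)
    {lo : ℝ} (hlo : ∀ i ≠ i₀, lo ≤ q.eval (μ i)) (y : E) :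
    q.eval (μ i₀) * ⟪b i₀, y⟫ ^ 2 + lo * (‖y‖ ^ 2 - ⟪b i₀, y⟫ ^ 2) ≤ ⟪y, aeval T q y⟫ := by
  rw [b.inner_aeval_apply_eq_sum_sq hT, ← b.sum_sq_inner_right, ← add_sum_erase _ _ (mem_univ i₀),
    ← add_sum_erase _ _ (mem_univ i₀), add_sub_cancel_left, mul_sum]
  gcongr with i hi
  exact hlo i (ne_of_mem_erase hi)

theorem Matrix.dotProduct_mulVec_le_of_apply_eq_zero {ι : Type*} [Fintype ι] {B : Matrix ι ι ℝ}
    {W : ℝ} (hW : ∀ u, B u u ≤ W) {s : Set ι} (hB : ∀ u ∈ s, ∀ v ∈ s, u ≠ v → B u v = 0)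
    {y : ι → ℝ} (hy : ∀ u ∉ s, y u = 0) : y ⬝ᵥ (B *ᵥ y) ≤ W * (y ⬝ᵥ y) := by
  have hdiag : ∀ u, y u * (B *ᵥ y) u = B u u * (y u * y u) := fun u => by
    by_cases hu : u ∈ s
    · rw [mulVec, dotProduct, sum_eq_single u (fun v _ hvu => ?_) (by simp)]
      · ring
      by_cases hv : v ∈ s
      · rw [hB u hu v hv hvu.symm, zero_mul]
      · rw [hy v hv, mul_zero]
    · simp [hy u hu]
  simp only [dotProduct, hdiag, mul_sum]
  gcongr with u
  · exact mul_self_nonneg _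
  · exact hW u

theorem SimpleGraph.aeval_adjMatrix_apply_eq_zero_s13 {V R : Type*} [Fintype V] [DecidableEq V]
    (G : SimpleGraph V) [DecidableRel G.Adj] [CommSemiring R] (q : R[X]) {u v : V}
    (h : ∀ w : G.Walk u v, q.natDegree < w.length) : aeval (G.adjMatrix R) q u v = 0 := by
  rw [aeval_eq_sum_range, Matrix.sum_apply]
  refine sum_eq_zero fun j hj => ?_
  have : IsEmpty {w : G.Walk u v | w.length = j} :=
    ⟨fun w => (h w).not_ge (w.2.le.trans (Nat.lt_succ_iff.mp (mem_range.mp hj)))⟩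
  rw [Matrix.smul_apply, adjMatrix_pow_apply_eq_card_walk, Fintype.card_eq_zero, Nat.cast_zero,
    smul_zero]

theorem SimpleGraph.Coloring.aeval_adjMatrix_apply_eq_zero_s13 {V R α : Type*} [Fintype V]
    [DecidableEq V] {G : SimpleGraph V} [DecidableRel G.Adj] [CommSemiring R] {k : ℕ}
    (C : (G.power k).Coloring α) {q : R[X]} (hq : q.natDegree ≤ k) {u v : V} (huv : u ≠ v)
    (hC : C u = C v) : aeval (G.adjMatrix R) q u v = 0 :=
  G.aeval_adjMatrix_apply_eq_zero_s13 q fun w =>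
    hq.trans_lt (not_le.mp fun hw => C.valid ⟨huv, w.reachable, (G.dist_le w).trans hw⟩ hC)

theorem div_le_card_of_sum_eq_one {κ : Type*} [Fintype κ] {t : κ → ℝ} (ht : ∑ j, t j = 1)
    {P lo W : ℝ} (hlo : lo < P) (h : ∀ j, P * t j ^ 2 + lo * (t j - t j ^ 2) ≤ W * t j) :
    (P - lo) / (W - lo) ≤ Fintype.card κ := by
  have hsum : lo + (P - lo) * ∑ j, t j ^ 2 ≤ W := by
    have := sum_le_sum fun j (_ : j ∈ univ) => h j
    simp only [sum_add_distrib, ← mul_sum, sum_sub_distrib, ht] at this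
    linarith
  have hcs : 1 ≤ Fintype.card κ * ∑ j, t j ^ 2 := by
    simpa [ht] using sq_sum_le_card_mul_sum_sq (s := univ) (f := t)
  have hW : 0 < W - lo := by nlinarith
  rw [div_le_iff₀ hW]
  nlinarith

theorem Matrix.ratio_bound_of_partition {ι κ : Type*} [Fintype ι] [DecidableEq ι] [Fintype κ]
    [DecidableEq κ] {A : Matrix ι ι ℝ} (b : OrthonormalBasis ι ℝ (EuclideanSpace ℝ ι)) {μ : ι → ℝ}
    (hb : ∀ i, A *ᵥ ⇑(b i) = μ i • ⇑(b i)) (q : ℝ[X]) (i₀ : ι) {W lo : ℝ}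
    (hlo : ∀ i ≠ i₀, lo ≤ q.eval (μ i)) (hlt : lo < q.eval (μ i₀))
    (hW : ∀ u, aeval A q u u ≤ W) (f : ι → κ)
    (hf : ∀ u v, u ≠ v → f u = f v → aeval A q u v = 0) :
    (q.eval (μ i₀) - lo) / (W - lo) ≤ Fintype.card κ := by
  set T := toLpLinAlgEquiv 2 A
  have hT : ∀ i, T (b i) = μ i • b i := fun i => by
    ext u; simpa [T] using congrFun (hb i) u
  have hTq : ∀ y, ⟪y, aeval T q y⟫ = ⇑y ⬝ᵥ (aeval A q *ᵥ ⇑y) := fun y => by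
    rw [aeval_algEquiv, EuclideanSpace.inner_eq_star_dotProduct, star_trivial, dotProduct_comm]
    rfl
  have hnorm : ∀ y : EuclideanSpace ℝ ι, ‖y‖ ^ 2 = ⇑y ⬝ᵥ ⇑y := fun y => by
    rw [← real_inner_self_eq_norm_sq, EuclideanSpace.inner_eq_star_dotProduct, star_trivial]
  set ν := b i₀
  set y : κ → EuclideanSpace ℝ ι := fun j => WithLp.toLp 2 fun u => if f u = j then ν u else 0
  have hinner : ∀ j, ⟪ν, y j⟫ = ‖y j‖ ^ 2 := fun j => by
    rw [hnorm, EuclideanSpace.inner_eq_star_dotProduct, star_trivial]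
    refine sum_congr rfl fun u _ => ?_
    simp only [y]
    split_ifs <;> simp
  have hsum : ∑ j, ‖y j‖ ^ 2 = 1 := by
    have hν : ‖ν‖ = 1 := b.orthonormal.1 i₀
    rw [← one_pow 2, ← hν]
    simp only [hnorm, dotProduct, y]
    rw [sum_comm]
    simp
  refine div_le_card_of_sum_eq_one hsum hlt fun j => ?_
  calc _ = q.eval (μ i₀) * ⟪ν, y j⟫ ^ 2 + lo * (‖y j‖ ^ 2 - ⟪ν, y j⟫ ^ 2) := by rw [hinner]
    _ ≤ ⟪y j, aeval T q (y j)⟫ := b.le_inner_aeval_apply hT q i₀ hlo (y j)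
    _ ≤ W * ‖y j‖ ^ 2 := by
      rw [hTq, hnorm]
      refine dotProduct_mulVec_le_of_apply_eq_zero hW (s := {u | f u = j})
        (fun u hu v hv huv => hf u v huv (hu.trans hv.symm)) fun u hu => if_neg hu

end

theorem first_ratio_bound_chi_k_general {n k : ℕ} (hn : 0 < n) (G : SimpleGraph (Fin n))
    [DecidableRel G.Adj]
    (lam : Fin n → ℝ)
    (hchar : (G.adjMatrix ℝ).charpoly = ∏ i, (X - C (lam i)))
    (p : Polynomial ℝ) (hp : p.natDegree ≤ k)
    (hgap : ∀ i, i ≠ ⟨0, hn⟩ → p.eval (lam i) < p.eval (lam ⟨0, hn⟩))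
    (W lamp : ℝ)
    (hW : IsGreatest {x | ∃ u, x = (aeval (G.adjMatrix ℝ) p) u u} W)
    (hlamp : IsLeast {x | ∃ i, i ≠ ⟨0, hn⟩ ∧ x = p.eval (lam i)} lamp)
    (c : ℕ) (hc : (G.power k).chromaticNumber = c) :
    (p.eval (lam ⟨0, hn⟩) - lamp) / (W - lamp) ≤ (c : ℝ) := by
  obtain ⟨b, hb⟩ :=
    (G.isHermitian_adjMatrix ℝ).exists_orthonormalBasis_mulVec_eq_of_charpoly_eq hchar
  obtain ⟨col⟩ : (G.power k).Colorable c := SimpleGraph.chromaticNumber_le_iff_colorable.mp hc.le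
  have hlt : lamp < p.eval (lam ⟨0, hn⟩) := by
    obtain ⟨i, hi, rfl⟩ := hlamp.1
    exact hgap i hi
  simpa using Matrix.ratio_bound_of_partition b hb p ⟨0, hn⟩ (fun i hi => hlamp.2 ⟨i, hi, rfl⟩)
    hlt (fun u => hW.2 ⟨u, rfl⟩) col fun u v huv => col.aeval_adjMatrix_apply_eq_zero_s13 hp huv

/-- **First ratio-type bound for `χ_k`.** Let `G` be a connected graph with eigenvalues
`λ₁ ≥ ⋯ ≥ λₙ` and `p` a polynomial of degree at most `k` with `p(λ₁) > p(λᵢ)` for all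
`i ≥ 2`. With `W(p) = max_u (p(A))_{uu}` and `λ(p) = min_{i∈[2,n]} p(λᵢ)`,
`χ_k(G) ≥ (p(λ₁) − λ(p)) / (W(p) − λ(p))`. -/
theorem first_ratio_bound_chi_k {n k : ℕ} (hn : 0 < n) (G : SimpleGraph (Fin n))
    [DecidableRel G.Adj] (hconn : G.Connected)
    (lam : Fin n → ℝ) (hlam : Antitone lam)
    (hchar : (G.adjMatrix ℝ).charpoly = ∏ i, (X - C (lam i)))
    (p : Polynomial ℝ) (hp : p.natDegree ≤ k)
    (hgap : ∀ i, i ≠ ⟨0, hn⟩ → p.eval (lam i) < p.eval (lam ⟨0, hn⟩))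
    (W lamp : ℝ)
    (hW : IsGreatest {x | ∃ u, x = (aeval (G.adjMatrix ℝ) p) u u} W)
    (hlamp : IsLeast {x | ∃ i, i ≠ ⟨0, hn⟩ ∧ x = p.eval (lam i)} lamp)
    (c : ℕ) (hc : (G.power k).chromaticNumber = c) :
    (p.eval (lam ⟨0, hn⟩) - lamp) / (W - lamp) ≤ (c : ℝ) :=
  first_ratio_bound_chi_k_general hn G lam hchar p hp hgap W lamp hW hlamp c hc
end

section
/- Let G be a k-partially walk-regular graph with eigenvalues λ₁ ≥ ... ≥ λₙ, let p be a polynomial of degree at most k with Σ_{i=1}^n p(λᵢ) = 0, and let Φ₁ ≥ Φ₂ ≥ ... ≥ Φₙ be the eigenvalues of p(A). If Φ₂ > 0, then χ_k(G) ≥ 1 − Φ_{n−χ_k+1}/Φ₂. -/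
open Polynomial Finset

/-!
Write `B = p(A)`. Walk-regularity up to `k` makes the diagonal of `B` constant, hence zero as
`tr B = ∑ p(λᵢ) = 0`, and `deg p ≤ k` kills `B u v` whenever `u ≠ v` are at distance `> k`. So `B`
vanishes on each class `Vᵢ` of a proper colouring of `G^k` with `c` colours.

For such a `B`, pick `x ≠ 0` in the span of the eigenvectors with eigenvalue `≤ Φ_{n-c+1}`
(dimension `≥ c`) such that the vectors `zᵢ = c • x|_{Vᵢ} - x` are orthogonal to the eigenvectors
with eigenvalue `> Φ₂` (at most one of them); as `∑ zᵢ = 0`, this is only `c - 1` extra linear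
conditions per such eigenvector. Expanding, `∑ zᵢᵀ B zᵢ = -c · xᵀ B x` and
`∑ ‖zᵢ‖² = c (c - 1) ‖x‖²`, so the Rayleigh bounds give
`Φ_{n-c+1} ‖x‖² ≥ xᵀ B x ≥ -(c - 1) Φ₂ ‖x‖²`.
-/

open Matrix

theorem Polynomial.map_univ_eq_of_prod_X_sub_C_eq {R ι : Type*} [CommRing R] [IsDomain R]
    [Fintype ι] {a b : ι → R} (h : ∏ i, (X - C (a i)) = ∏ i, (X - C (b i))) :
    univ.val.map a = univ.val.map b := by
  have roots_eq : ∀ f : ι → R, (∏ i, (X - C (f i))).roots = univ.val.map f := fun f => by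
    rw [roots_prod _ _ (by simp [prod_ne_zero_iff, X_sub_C_ne_zero])]
    simp
  rw [← roots_eq a, ← roots_eq b, h]

section MultisetEq

variable {ι M : Type*} [Fintype ι] {a b : ι → M}

theorem Finset.sum_comp_eq_of_map_univ_eq {N : Type*} [AddCommMonoid N]
    (h : univ.val.map a = univ.val.map b) (f : M → N) : ∑ i, f (a i) = ∑ i, f (b i) := by
  have := congrArg (fun s => (s.map f).sum) h
  rwa [Multiset.map_map, Multiset.map_map] at this

theorem Finset.card_filter_comp_eq_of_map_univ_eq (h : univ.val.map a = univ.val.map b)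
    (P : M → Prop) [DecidablePred P] : #{i | P (a i)} = #{i | P (b i)} := by
  have := congrArg (Multiset.countP P) h
  rwa [Multiset.countP_map, Multiset.countP_map] at this

end MultisetEq

section AntitoneFin

variable {α : Type*} [LinearOrder α] {n : ℕ} {f : Fin n → α}

theorem Antitone.card_filter_apply_lt_le (hf : Antitone f) (a : Fin n) :
    #{i | f a < f i} ≤ a := by
  calc #{i | f a < f i} ≤ #(Iio a) :=
        card_le_card fun i hi => mem_Iio.mpr (lt_of_not_ge fun hai =>
          (mem_filter.mp hi).2.not_ge (hf hai))
    _ = a := Fin.card_Iio a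

theorem Antitone.le_card_filter_le_apply (hf : Antitone f) (a : Fin n) :
    n - a ≤ #{i | f i ≤ f a} := by
  calc n - a = #(Ici a) := (Fin.card_Ici a).symm
    _ ≤ _ := card_le_card fun i hi => mem_filter.mpr ⟨mem_univ i, hf (mem_Ici.mp hi)⟩

end AntitoneFin

theorem Matrix.exists_mulVec_eq_zero_of_card_lt {m n K : Type*} [Fintype m] [Fintype n]
    [Field K] (M : Matrix m n K) (h : Fintype.card m < Fintype.card n) :
    ∃ v ≠ 0, M *ᵥ v = 0 := by
  obtain ⟨v, hv, hv0⟩ := (Submodule.ne_bot_iff _).mp <|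
    LinearMap.ker_ne_bot_of_finrank_lt (f := M.mulVecLin) (by simpa using h)
  exact ⟨v, hv0, hv⟩

theorem Matrix.IsHermitian.dotProduct_mulVec_le {ι : Type*} [Fintype ι] [DecidableEq ι]
    {B : Matrix ι ι ℝ} (hB : B.IsHermitian) {x : ι → ℝ} {μ : ℝ}
    (hx : ∀ j, μ < hB.eigenvalues j → x ⬝ᵥ ⇑(hB.eigenvectorBasis j) = 0) :
    x ⬝ᵥ (B *ᵥ x) ≤ μ * (x ⬝ᵥ x) := by
  set U : Matrix ι ι ℝ := (hB.eigenvectorUnitary : Matrix ι ι ℝ)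
  set b := star U *ᵥ x with hb
  have hbj : ∀ j, b j = x ⬝ᵥ ⇑(hB.eigenvectorBasis j) := fun j => by
    simp [b, U, mulVec, dotProduct, mul_comm]
  have hxU : x ᵥ* U = b := by
    rw [hb, star_eq_conjTranspose, conjTranspose_eq_transpose_of_trivial, mulVec_transpose]
  have quad : x ⬝ᵥ (B *ᵥ x) = ∑ j, hB.eigenvalues j * b j ^ 2 := by
    conv_lhs => rw [hB.spectral_theorem, Unitary.conjStarAlgAut_apply]
    rw [← mulVec_mulVec, ← mulVec_mulVec, dotProduct_mulVec, hxU]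
    change b ⬝ᵥ (diagonal _ *ᵥ b) = _
    simp [dotProduct, mulVec_diagonal, sq, mul_left_comm]
  have norm : x ⬝ᵥ x = ∑ j, b j ^ 2 := by
    have hUb : U *ᵥ b = x := by
      rw [hb, mulVec_mulVec, Unitary.mul_star_self_of_mem hB.eigenvectorUnitary.2, one_mulVec]
    calc x ⬝ᵥ x = x ⬝ᵥ (U *ᵥ b) := by rw [hUb]
      _ = ∑ j, b j ^ 2 := by rw [dotProduct_mulVec, hxU]; simp only [dotProduct, sq]
  rw [quad, norm, mul_sum]
  refine sum_le_sum fun j _ => ?_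
  rcases le_or_gt (hB.eigenvalues j) μ with hj | hj
  · exact mul_le_mul_of_nonneg_right hj (sq_nonneg _)
  · simp [hbj, hx j hj]

theorem Matrix.isHermitian_aeval {ι : Type*} [Fintype ι] [DecidableEq ι] {A : Matrix ι ι ℝ}
    (hA : A.IsHermitian) (p : ℝ[X]) : (aeval A p).IsHermitian :=
  cfc_polynomial p A ▸ cfc_predicate _ _

theorem Matrix.IsHermitian.trace_aeval {ι : Type*} [Fintype ι] [DecidableEq ι]
    {A : Matrix ι ι ℝ} (hA : A.IsHermitian) (p : ℝ[X]) :
    (aeval A p).trace = ∑ i, p.eval (hA.eigenvalues i) := by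
  have hB := isHermitian_aeval hA p
  have hspec := map_univ_eq_of_prod_X_sub_C_eq
    (hB.charpoly_eq.symm.trans (cfc_polynomial p A ▸ hA.charpoly_cfc_eq p.eval))
  rw [hB.trace_eq_sum_eigenvalues, RCLike.ofReal_real_eq_id]
  exact sum_comp_eq_of_map_univ_eq hspec id

section ClassContrast

variable {ι κ : Type*} [Fintype κ] [DecidableEq κ] (col : ι → κ)

def classContrast (x : ι → ℝ) (i : κ) : ι → ℝ :=
  fun v => ((if col v = i then (Fintype.card κ : ℝ) else 0) - 1) * x v

theorem sum_classContrast (x : ι → ℝ) : ∑ i, classContrast col x i = 0 := by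
  ext v
  simp [classContrast, ← sum_mul, sum_sub_distrib]

theorem sum_classContrast_apply_mul (x : ι → ℝ) (u v : ι) :
    ∑ i, classContrast col x i u * classContrast col x i v =
      ((if col u = col v then (Fintype.card κ : ℝ) ^ 2 else 0) - Fintype.card κ) * (x u * x v) := by
  simp only [classContrast]
  by_cases h : col u = col v <;>
    simp only [h, sub_mul, mul_sub, ite_mul, mul_ite, zero_mul, mul_zero, one_mul, zero_sub,
      neg_mul, sum_sub_distrib, sum_ite_eq, mem_univ, if_true, if_false, sum_const, card_univ,
      nsmul_eq_mul] <;>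
    ring

variable [Fintype ι]

theorem classContrast_dotProduct_comm (x y : ι → ℝ) (i : κ) :
    classContrast col x i ⬝ᵥ y = x ⬝ᵥ classContrast col y i := by
  simp only [classContrast, dotProduct]
  exact sum_congr rfl fun v _ => by ring

theorem sum_classContrast_dotProduct_mulVec (B : Matrix ι ι ℝ) (x : ι → ℝ) :
    ∑ i, classContrast col x i ⬝ᵥ (B *ᵥ classContrast col x i) =
      ∑ u, ∑ v, ((if col u = col v then (Fintype.card κ : ℝ) ^ 2 else 0) - Fintype.card κ) *
        (x u * B u v * x v) := by
  simp only [dotProduct, mulVec, mul_sum]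
  rw [sum_comm]
  refine sum_congr rfl fun u _ => ?_
  rw [sum_comm]
  refine sum_congr rfl fun v _ => ?_
  calc ∑ i, classContrast col x i u * (B u v * classContrast col x i v)
      = B u v * ∑ i, classContrast col x i u * classContrast col x i v := by
        rw [mul_sum]; exact sum_congr rfl fun i _ => by ring
    _ = _ := by rw [sum_classContrast_apply_mul]; ring

theorem sum_classContrast_dotProduct_mulVec_of_apply_eq_zero {B : Matrix ι ι ℝ}
    (hB : ∀ u v, col u = col v → B u v = 0) (x : ι → ℝ) :
    ∑ i, classContrast col x i ⬝ᵥ (B *ᵥ classContrast col x i) =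
      -Fintype.card κ * (x ⬝ᵥ (B *ᵥ x)) := by
  rw [sum_classContrast_dotProduct_mulVec]
  simp only [dotProduct, mulVec, mul_sum]
  refine sum_congr rfl fun u _ => sum_congr rfl fun v _ => ?_
  by_cases h : col u = col v
  · simp [hB u v h]
  · simp only [h, if_false]; ring

theorem sum_classContrast_dotProduct_self (x : ι → ℝ) :
    ∑ i, classContrast col x i ⬝ᵥ classContrast col x i =
      ((Fintype.card κ : ℝ) ^ 2 - Fintype.card κ) * (x ⬝ᵥ x) := by
  classical
  simpa [one_apply, dotProduct, mul_sum, mul_comm, mul_left_comm, mul_assoc] using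
    sum_classContrast_dotProduct_mulVec col 1 x

variable [DecidableEq ι] {B : Matrix ι ι ℝ} {μ t : ℝ}

theorem Matrix.IsHermitian.exists_ne_zero_orthogonal [Nonempty κ] (hB : B.IsHermitian)
    (hμ : #{j | μ < hB.eigenvalues j} ≤ 1) (ht : Fintype.card κ ≤ #{j | hB.eigenvalues j ≤ t}) :
    ∃ x ≠ 0, (∀ j, t < hB.eigenvalues j → x ⬝ᵥ ⇑(hB.eigenvectorBasis j) = 0) ∧
      ∀ i j, μ < hB.eigenvalues j → classContrast col x i ⬝ᵥ ⇑(hB.eigenvectorBasis j) = 0 := by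
  set v := fun j => ⇑(hB.eigenvectorBasis j)
  let i₀ := Classical.arbitrary κ
  -- One row per linear condition; none is needed for `i₀`, as `∑ i, classContrast col x i = 0`.
  let M : Matrix ({j // t < hB.eigenvalues j} ⊕ ({i // i ≠ i₀} × {j // μ < hB.eigenvalues j}))
      ι ℝ :=
    Sum.elim (fun j => v j) (fun p => classContrast col (v p.2) p.1)
  have hcard : Fintype.card ({j // t < hB.eigenvalues j} ⊕
      ({i // i ≠ i₀} × {j // μ < hB.eigenvalues j})) < Fintype.card ι := by
    have hsplit := card_filter_add_card_filter_not (s := univ) (fun j => hB.eigenvalues j ≤ t)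
    have hne : #{i | i ≠ i₀} = Fintype.card κ - 1 := by
      rw [filter_ne', card_erase_of_mem (mem_univ _), card_univ]
    simp only [not_le, card_univ] at hsplit
    simp only [Fintype.card_sum, Fintype.card_prod, Fintype.card_subtype, hne]
    have := Nat.mul_le_mul_left (Fintype.card κ - 1) hμ
    have := Fintype.card_pos (α := κ)
    omega
  obtain ⟨x, hx0, hMx⟩ := M.exists_mulVec_eq_zero_of_card_lt hcard
  have row : ∀ r, M r ⬝ᵥ x = 0 := fun r => congrFun hMx r
  refine ⟨x, hx0, fun j hj => by simpa [M, dotProduct_comm] using row (.inl ⟨j, hj⟩),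
    fun i j hj => ?_⟩
  have off : ∀ i ≠ i₀, classContrast col x i ⬝ᵥ v j = 0 := fun i hi => by
    simpa [M, classContrast_dotProduct_comm, dotProduct_comm] using row (.inr (⟨i, hi⟩, ⟨j, hj⟩))
  by_cases hi : i = i₀
  · have hsum := congrArg (· ⬝ᵥ v j) (sum_classContrast col x)
    simp only [sum_dotProduct, zero_dotProduct] at hsum
    rw [← add_sum_erase _ _ (mem_univ i₀),
      sum_eq_zero fun i hi' => off i (ne_of_mem_erase hi'), add_zero] at hsum
    rw [hi]; exact hsum
  · exact off i hi

theorem Matrix.IsHermitian.haemers_bound [Nonempty κ] (hB : B.IsHermitian)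
    (hcol : ∀ u v, col u = col v → B u v = 0)
    (hμ : #{j | μ < hB.eigenvalues j} ≤ 1) (ht : Fintype.card κ ≤ #{j | hB.eigenvalues j ≤ t}) :
    -((Fintype.card κ : ℝ) - 1) * μ ≤ t := by
  obtain ⟨x, hx0, hxt, hxμ⟩ := hB.exists_ne_zero_orthogonal col hμ ht
  set c : ℝ := (Fintype.card κ : ℝ)
  have hc : 0 < c := by simp [c, Fintype.card_pos]
  have hN : 0 < x ⬝ᵥ x :=
    lt_of_le_of_ne (sum_nonneg fun v _ => mul_self_nonneg (x v))
      (Ne.symm (dotProduct_self_eq_zero.not.mpr hx0))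
  have hlow : x ⬝ᵥ (B *ᵥ x) ≤ t * (x ⬝ᵥ x) := hB.dotProduct_mulVec_le hxt
  have hup : -c * (x ⬝ᵥ (B *ᵥ x)) ≤ μ * ((c ^ 2 - c) * (x ⬝ᵥ x)) := by
    rw [← sum_classContrast_dotProduct_mulVec_of_apply_eq_zero col hcol,
      ← sum_classContrast_dotProduct_self, mul_sum]
    exact sum_le_sum fun i _ => hB.dotProduct_mulVec_le (hxμ i)
  have hquad : -((c - 1) * μ) * (x ⬝ᵥ x) ≤ x ⬝ᵥ (B *ᵥ x) :=
    le_of_mul_le_mul_left (by linear_combination hup) hc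
  exact le_of_mul_le_mul_right (by linarith) hN

end ClassContrast

theorem Matrix.aeval_apply {n R : Type*} [Fintype n] [DecidableEq n] [CommSemiring R]
    (A : Matrix n n R) (p : R[X]) (u v : n) :
    aeval A p u v = ∑ l ∈ range (p.natDegree + 1), p.coeff l * (A ^ l) u v := by
  simp [aeval_eq_sum_range, sum_apply]

theorem Matrix.aeval_apply_self_eq_of_pow_apply_self_eq {n R : Type*} [Fintype n] [DecidableEq n]
    [CommSemiring R] {A : Matrix n n R} {p : R[X]} {u v : n}
    (h : ∀ l ≤ p.natDegree, (A ^ l) u u = (A ^ l) v v) : aeval A p u u = aeval A p v v := by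
  rw [aeval_apply, aeval_apply]
  exact sum_congr rfl fun l hl => by rw [h l (Nat.lt_succ_iff.mp (mem_range.mp hl))]

theorem Matrix.apply_self_eq_zero_of_trace_eq_zero {n R : Type*} [Fintype n] [Field R]
    [CharZero R] {M : Matrix n n R} (hM : ∀ u v, M u u = M v v) (htr : M.trace = 0) (u : n) :
    M u u = 0 := by
  have : Nonempty n := ⟨u⟩
  have : (Fintype.card n : R) * M u u = 0 := by
    rw [← htr, trace, ← nsmul_eq_mul, ← card_univ, ← sum_const]
    exact sum_congr rfl fun v _ => hM u v
  exact (mul_eq_zero.mp this).resolve_left (Nat.cast_ne_zero.mpr Fintype.card_ne_zero)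

namespace SimpleGraph

variable {V : Type*} [Fintype V] [DecidableEq V] (G : SimpleGraph V) [DecidableRel G.Adj]
  {k : ℕ} {u v : V}

theorem adjMatrix_pow_apply_eq_zero_of_not_adj_power {R : Type*} [Semiring R] (huv : u ≠ v)
    (h : ¬ (G.power k).Adj u v) {l : ℕ} (hl : l ≤ k) : (G.adjMatrix R ^ l) u v = 0 := by
  rw [adjMatrix_pow_apply_eq_card_walk, Fintype.card_eq_zero_iff.mpr
    ⟨fun ⟨w, hw⟩ => h ⟨huv, ⟨w⟩, (hw ▸ dist_le w).trans hl⟩⟩, Nat.cast_zero]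

theorem aeval_adjMatrix_apply_eq_zero_of_not_adj_power {R : Type*} [CommSemiring R] {p : R[X]}
    (hp : p.natDegree ≤ k) (huv : u ≠ v) (h : ¬ (G.power k).Adj u v) :
    aeval (G.adjMatrix R) p u v = 0 := by
  rw [aeval_apply]
  exact sum_eq_zero fun l hl => by
    rw [G.adjMatrix_pow_apply_eq_zero_of_not_adj_power huv h
      ((Nat.lt_succ_iff.mp (mem_range.mp hl)).trans hp), mul_zero]

theorem aeval_adjMatrix_apply_eq_zero_of_coloring {R α : Type*} [Field R] [CharZero R]
    {p : R[X]} (hp : p.natDegree ≤ k)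
    (hwr : ∀ l ≤ k, ∀ u v, (G.adjMatrix R ^ l) u u = (G.adjMatrix R ^ l) v v)
    (htr : (aeval (G.adjMatrix R) p).trace = 0) (col : (G.power k).Coloring α)
    (h : col u = col v) : aeval (G.adjMatrix R) p u v = 0 := by
  rcases eq_or_ne u v with rfl | huv
  · exact apply_self_eq_zero_of_trace_eq_zero (fun u v =>
      aeval_apply_self_eq_of_pow_apply_self_eq fun l hl => hwr l (hl.trans hp) u v) htr u
  · exact G.aeval_adjMatrix_apply_eq_zero_of_not_adj_power hp huv (fun hadj => col.valid hadj h)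

end SimpleGraph


/-- **Second ratio-type bound for `χ_k` (extension of Haemers' bound).** Let `G` be a
`k`-partially walk-regular graph, `p` a polynomial of degree at most `k` with
`Σᵢ p(λᵢ) = 0`, and let `Φ₁ ≥ ⋯ ≥ Φₙ` be the eigenvalues of `p(A)`. If `Φ₂ > 0`, then
`χ_k(G) ≥ 1 − Φ_{n−χ_k+1}/Φ₂`. -/
theorem second_ratio_bound_chi_k {n k : ℕ} (hn : 2 ≤ n) (G : SimpleGraph (Fin n))
    [DecidableRel G.Adj]
    (hwr : ∀ l ≤ k, ∀ u v : Fin n,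
      ((G.adjMatrix ℝ) ^ l) u u = ((G.adjMatrix ℝ) ^ l) v v)
    (lam : Fin n → ℝ)
    (hchar : (G.adjMatrix ℝ).charpoly = ∏ i, (X - C (lam i)))
    (p : Polynomial ℝ) (hp : p.natDegree ≤ k)
    (htr : ∑ i, p.eval (lam i) = 0)
    (Phi : Fin n → ℝ) (hPhi : Antitone Phi)
    (hPhichar : (aeval (G.adjMatrix ℝ) p).charpoly = ∏ i, (X - C (Phi i)))
    (hPhi2 : 0 < Phi ⟨1, by omega⟩)
    (c : ℕ) (hc : (G.power k).chromaticNumber = c) (hcpos : 0 < c) (hcn : c ≤ n) :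
    1 - Phi ⟨n - c, by omega⟩ / Phi ⟨1, by omega⟩ ≤ (c : ℝ) := by
  have hA := G.isHermitian_adjMatrix ℝ
  have hB := isHermitian_aeval hA p
  have hPhiB : univ.val.map Phi = univ.val.map hB.eigenvalues :=
    map_univ_eq_of_prod_X_sub_C_eq (hPhichar.symm.trans hB.charpoly_eq)
  have htrace : (aeval (G.adjMatrix ℝ) p).trace = 0 := by
    rw [hA.trace_aeval, ← htr]
    exact sum_comp_eq_of_map_univ_eq
      (map_univ_eq_of_prod_X_sub_C_eq (hA.charpoly_eq.symm.trans hchar)) p.eval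
  obtain ⟨col⟩ := SimpleGraph.chromaticNumber_le_iff_colorable.mp hc.le
  have : Nonempty (Fin c) := Fin.pos_iff_nonempty.mp hcpos
  have key := hB.haemers_bound col
    (fun u v => G.aeval_adjMatrix_apply_eq_zero_of_coloring hp hwr htrace col)
    (μ := Phi ⟨1, by omega⟩) (t := Phi ⟨n - c, by omega⟩)
    (by
      rw [← card_filter_comp_eq_of_map_univ_eq hPhiB (Phi ⟨1, by omega⟩ < ·)]
      exact hPhi.card_filter_apply_lt_le _)
    (by
      rw [← card_filter_comp_eq_of_map_univ_eq hPhiB (· ≤ Phi ⟨n - c, by omega⟩), Fintype.card_fin]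
      simpa [Nat.sub_sub_self hcn] using hPhi.le_card_filter_le_apply ⟨n - c, by omega⟩)
  rw [Fintype.card_fin] at key
  rw [sub_le_iff_le_add, ← sub_le_iff_le_add', le_div_iff₀ hPhi2]
  linarith
end
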